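/- Let A be the 8×8 real symmetric matrix whose rows are (4,0,0,−2,−2,0,0,0), (0,4,0,−2,−2,0,0,0), (0,0,4,−2,−2,0,0,0), (−2,−2,−2,13,−1,−2,−2,−2), (−2,−2,−2,−1,13,−2,−2,−2), (0,0,0,−2,−2,4,0,0), (0,0,0,−2,−2,0,4,0), (0,0,0,−2,−2,0,0,4). Then the characteristic polynomial of A equals X·(X − 4)⁵·(X − 14)·(X − 16); equivalently, the eigenvalues of A, counted with multiplicity, are 0, 4, 4, 4, 4, 4, 14 and 16. In particular, the kernel of A is one-dimensional and the smallest nonzero eigenvalue of A equals 4. -/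

import Mathlib

/-
Split the vertices into the six leaves `0, 1, 2, 5, 6, 7` and the two hubs `3, 4`. In this
ordering `r • 1 - A` has the scalar block `(r - 4) • 1` on the leaves, so for `r ≠ 4` its
determinant is `(r - 4)⁶` times that of a `2 × 2` Schur complement, which gives the
characteristic polynomial. Because `A` is symmetric, its nullity is the multiplicity of the
root `0`, and its eigenvalues are the roots `0, 4, 14, 16`.
-/

open Polynomial

/-- The Laplacian matrix `A_4(q)` of the explicit example of Section 2.3. -/
def exampleLaplacian : Matrix (Fin 8) (Fin 8) ℝ :=
  !![ 4,  0,  0, -2, -2,  0,  0,  0;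
      0,  4,  0, -2, -2,  0,  0,  0;
      0,  0,  4, -2, -2,  0,  0,  0;
     -2, -2, -2, 13, -1, -2, -2, -2;
     -2, -2, -2, -1, 13, -2, -2, -2;
      0,  0,  0, -2, -2,  4,  0,  0;
      0,  0,  0, -2, -2,  0,  4,  0;
      0,  0,  0, -2, -2,  0,  0,  4]

namespace Matrix

theorem det_fromBlocks_smul_one {m n K : Type*} [Fintype m] [DecidableEq m] [Fintype n]
    [DecidableEq n] [Field K] {c : K} (hc : c ≠ 0) (B : Matrix m n K) (C : Matrix n m K)
    (D : Matrix n n K) :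
    (fromBlocks (c • 1) B C D).det = c ^ Fintype.card m * (D - c⁻¹ • (C * B)).det := by
  let : Invertible (c • (1 : Matrix m m K)) :=
    ⟨c⁻¹ • 1, by simp [smul_smul, hc], by simp [smul_smul, hc]⟩
  have hinv : ⅟(c • (1 : Matrix m m K)) = c⁻¹ • 1 := rfl
  rw [det_fromBlocks₁₁, hinv, det_smul, det_one, mul_one, Matrix.mul_smul, Matrix.mul_one,
    Matrix.smul_mul]

theorem exists_mulVec_eq_smul_iff_isRoot_charpoly {n K : Type*} [Fintype n] [DecidableEq n]
    [Field K] (A : Matrix n n K) (μ : K) :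
    (∃ v, v ≠ 0 ∧ A *ᵥ v = μ • v) ↔ A.charpoly.IsRoot μ := by
  rw [← charpoly_toLin', ← Module.End.hasEigenvalue_iff_isRoot_charpoly]
  constructor
  · rintro ⟨v, hv, hAv⟩
    exact Module.End.hasEigenvalue_of_hasEigenvector ⟨Module.End.mem_eigenspace_iff.mpr hAv, hv⟩
  · intro h
    obtain ⟨v, hv⟩ := h.exists_hasEigenvector
    exact ⟨v, hv.2, Module.End.mem_eigenspace_iff.mp hv.1⟩

theorem IsHermitian.finrank_ker_mulVecLin {n 𝕜 : Type*} [Fintype n] [DecidableEq n] [RCLike 𝕜]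
    {A : Matrix n n 𝕜} (hA : A.IsHermitian) :
    Module.finrank 𝕜 (LinearMap.ker A.mulVecLin) = A.charpoly.rootMultiplicity 0 := by
  classical
  have hrank := A.mulVecLin.finrank_range_add_finrank_ker
  rw [← rank, hA.rank_eq_card_non_zero_eigs, Module.finrank_fintype_fun_eq_card,
    Fintype.card_subtype_compl] at hrank
  have hzero : A.charpoly.rootMultiplicity 0 = Fintype.card {i // hA.eigenvalues i = 0} := by
    rw [← count_roots, hA.roots_charpoly_eq_eigenvalues, Multiset.count_map, Fintype.card_subtype]
    simp only [Function.comp_apply, eq_comm (a := (0 : 𝕜)), RCLike.ofReal_eq_zero]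
    rfl
  have := Fintype.card_subtype_le fun i ↦ hA.eigenvalues i = 0
  omega

end Matrix

theorem exampleLaplacian_isHermitian : exampleLaplacian.IsHermitian := by
  ext i j
  fin_cases i <;> fin_cases j <;> rfl

def leafHubEquiv : Fin 6 ⊕ Fin 2 ≃ Fin 8 where
  toFun := Sum.elim ![0, 1, 2, 5, 6, 7] ![3, 4]
  invFun := ![.inl 0, .inl 1, .inl 2, .inr 0, .inr 1, .inl 3, .inl 4, .inl 5]
  left_inv := by decide
  right_inv := by decide

theorem scalar_sub_exampleLaplacian_submatrix (r : ℝ) :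
    (Matrix.scalar (Fin 8) r - exampleLaplacian).submatrix leafHubEquiv leafHubEquiv =
      Matrix.fromBlocks ((r - 4) • 1) (Matrix.of fun _ _ ↦ 2) (Matrix.of fun _ _ ↦ 2)
        !![r - 13, 1; 1, r - 13] := by
  ext (i | i) (j | j) <;> fin_cases i <;> fin_cases j <;>
    simp [leafHubEquiv, exampleLaplacian]

theorem det_scalar_sub_exampleLaplacian {r : ℝ} (hr : r ≠ 4) :
    (Matrix.scalar (Fin 8) r - exampleLaplacian).det = r * (r - 4) ^ 5 * (r - 14) * (r - 16) := by
  have hr4 : r - 4 ≠ 0 := sub_ne_zero.mpr hr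
  rw [← Matrix.det_submatrix_equiv_self leafHubEquiv, scalar_sub_exampleLaplacian_submatrix,
    Matrix.det_fromBlocks_smul_one hr4]
  have hCB : (Matrix.of fun _ _ ↦ 2 : Matrix (Fin 2) (Fin 6) ℝ) *
      (Matrix.of fun _ _ ↦ 2 : Matrix (Fin 6) (Fin 2) ℝ) = Matrix.of fun _ _ ↦ 24 := by
    ext i j
    norm_num [Matrix.mul_apply]
  rw [hCB, Matrix.det_fin_two]
  simp only [Matrix.smul_of, Matrix.sub_apply, Matrix.of_apply, Matrix.cons_val',
    Matrix.cons_val_zero, Matrix.cons_val_one, Matrix.cons_val_fin_one, Pi.smul_apply,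
    smul_eq_mul, Fintype.card_fin]
  field_simp
  ring

theorem exampleLaplacian_charpoly :
    exampleLaplacian.charpoly = X * (X - C 4) ^ 5 * (X - C 14) * (X - C 16) := by
  refine eq_of_infinite_eval_eq _ _ ((Set.Ioi_infinite (4 : ℝ)).mono fun r hr ↦ ?_)
  rw [Set.mem_ofPred_eq, Matrix.eval_charpoly, det_scalar_sub_exampleLaplacian hr.ne']
  simp

theorem isRoot_exampleCharpoly_iff {μ : ℝ} :
    (X * (X - C 4) ^ 5 * (X - C 14) * (X - C 16) : ℝ[X]).IsRoot μ ↔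
      μ = 0 ∨ μ = 4 ∨ μ = 14 ∨ μ = 16 := by
  simp [sub_eq_zero, or_assoc]

theorem rootMultiplicity_zero_exampleCharpoly :
    (X * (X - C 4) ^ 5 * (X - C 14) * (X - C 16) : ℝ[X]).rootMultiplicity 0 = 1 := by
  rw [← count_roots]
  simp [roots_mul, X_sub_C_ne_zero, roots_X_sub_C]

theorem exists_exampleLaplacian_mulVec_eq_smul_iff (μ : ℝ) :
    (∃ v, v ≠ 0 ∧ exampleLaplacian.mulVec v = μ • v) ↔
      μ = 0 ∨ μ = 4 ∨ μ = 14 ∨ μ = 16 := by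
  rw [Matrix.exists_mulVec_eq_smul_iff_isRoot_charpoly, exampleLaplacian_charpoly,
    isRoot_exampleCharpoly_iff]

/-- Section 2.3: the characteristic polynomial of the explicit 8×8
Laplacian matrix is `X (X−4)⁵ (X−14) (X−16)`; in particular its kernel is
one-dimensional, and its smallest nonzero eigenvalue equals `4`. -/
theorem exampleLaplacian_spectrum :
    exampleLaplacian.charpoly
        = X * (X - C 4) ^ 5 * (X - C 14) * (X - C 16) ∧
    Module.finrank ℝ (LinearMap.ker exampleLaplacian.mulVecLin) = 1 ∧
    IsLeast {μ : ℝ | μ ≠ 0 ∧ ∃ v : Fin 8 → ℝ, v ≠ 0 ∧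
      exampleLaplacian.mulVec v = μ • v} 4 := by
  refine ⟨exampleLaplacian_charpoly, ?_, ⟨four_ne_zero, ?_⟩, ?_⟩
  · rw [exampleLaplacian_isHermitian.finrank_ker_mulVecLin, exampleLaplacian_charpoly,
      rootMultiplicity_zero_exampleCharpoly]
  · exact (exists_exampleLaplacian_mulVec_eq_smul_iff 4).2 (by norm_num)
  · rintro μ ⟨hμ, hv⟩
    rcases (exists_exampleLaplacian_mulVec_eq_smul_iff μ).1 hv with rfl | rfl | rfl | rfl
    · exact (hμ rfl).elim
    all_goals norm_num
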